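/- arXiv:2504.15957 — 3 statements merged into one kernel-verified Lean document; each statement's English description precedes it below -/
import Mathlib

section
/- Let F be a field of characteristic 2, let p = x^d + p₁x^{d-1} + … + p_d ∈ F[x] be a monic irreducible polynomial of even degree d = 2e (where p_k denotes the coefficient of x^{d-k}, with p₀ = 1), let L = F[x]/(p), and let t_p : L → F be the F-linear map with t_p(x^j) = 0 for 0 ≤ j ≤ d-2 and t_p(x^{d-1}) = 1. Let a ∈ F and let i ≥ 0 be an integer. Then the Scharlau transfer t_p∘[1, ax^i] (a quadratic form of dimension 2d over F) is Witt equivalent to the orthogonal sum ⊥_{j=0}^{e-1} [p_{2j+1}, aγ_{i-2j-1}], where γ_n ∈ F is the coefficient of x^{d-1} in the remainder of x^{d+n-1} upon division by p for n ≥ 0, and γ_n := 0 for n < 0. -/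
open QuadraticMap Polynomial

/-- The binary quadratic form `[a,b] : (u,v) ↦ a u² + u v + b v²` over `K`. -/
noncomputable def binQF (K : Type*) [CommRing K] (a b : K) : QuadraticForm K (K × K) :=
  a • QuadraticMap.linMulLin (LinearMap.fst K K K) (LinearMap.fst K K K)
    + QuadraticMap.linMulLin (LinearMap.fst K K K) (LinearMap.snd K K K)
    + b • QuadraticMap.linMulLin (LinearMap.snd K K K) (LinearMap.snd K K K)

/-- The hyperbolic plane `(u,v) ↦ u v` over `K`. -/
noncomputable def hypQF (K : Type*) [CommRing K] : QuadraticForm K (K × K) :=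
  QuadraticMap.linMulLin (LinearMap.fst K K K) (LinearMap.snd K K K)

/-- The orthogonal sum of `r` copies of the hyperbolic plane over `K`. -/
noncomputable def hypPow (K : Type*) [CommRing K] (r : ℕ) : QuadraticForm K (Fin r → K × K) :=
  QuadraticMap.pi fun _ => hypQF K

/-- Witt equivalence of quadratic forms over `K`: `Q₁ ⊥ H^{⊥r}` is isometric to
`Q₂ ⊥ H^{⊥s}` for some `r, s`. -/
def WittEquiv {K : Type*} [CommRing K] {V₁ V₂ : Type*} [AddCommGroup V₁] [Module K V₁]
    [AddCommGroup V₂] [Module K V₂]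
    (Q₁ : QuadraticForm K V₁) (Q₂ : QuadraticForm K V₂) : Prop :=
  ∃ r s : ℕ, (Q₁.prod (hypPow K r)).Equivalent (Q₂.prod (hypPow K s))

/-- The Scharlau transfer of a quadratic form `Q` over `L` along an `F`-linear functional
`t : L → F`: the quadratic form `t ∘ Q` over `F` on `V` viewed as an `F`-vector space. -/
noncomputable def scharlauTransfer {F L : Type*} [Field F] [CommRing L] [Algebra F L]
    (V : Type*) [AddCommGroup V] [Module L V] [Module F V] [IsScalarTower F L V]
    (t : L →ₗ[F] F) (Q : QuadraticForm L V) : QuadraticForm F V :=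
  t.compQuadraticMap' Q

/-!
In characteristic 2 the polar form of `t_p ∘ [1, c]` is
`((y, z), (y', z')) ↦ t_p (y z' + y' z)`. Hence the powers `x^s` (`s < d`) and the basis `dual_s`
of `L` dual to them under the pairing `t_p (y z)` give a symplectic basis `(dual_s, 0), (0, x^s)`
of the polar form, in which `t_p ∘ [1, c]` is the orthogonal sum of the planes
`[t_p (dual_s²), t_p (c x^{2s})]`. A direct computation gives `t_p (dual_s²) = p_{d-2s-1}`, which
vanishes for `s ≥ e`, so those `e` planes are hyperbolic, while for `s = e - 1 - j` the plane is
`[p_{2j+1}, a γ_{i-2j-1}]`.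
-/

section BinaryForms

variable {R : Type*} [CommRing R]

@[simp]
lemma binQF_apply (a b : R) (z : R × R) :
    binQF R a b z = a * (z.1 * z.1) + z.1 * z.2 + b * (z.2 * z.2) := by
  simp [binQF, linMulLin_apply]

@[simp]
lemma hypQF_apply (z : R × R) : hypQF R z = z.1 * z.2 := by
  simp [hypQF, linMulLin_apply]

lemma polar_binQF_of_two_eq_zero (h2 : (2 : R) = 0) (a b : R) (z w : R × R) :
    polar (binQF R a b) z w = z.1 * w.2 + w.1 * z.2 := by
  simp only [polar, binQF_apply, Prod.fst_add, Prod.snd_add]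
  linear_combination (a * z.1 * w.1 + b * z.2 * w.2) * h2

lemma binQF_zero_equivalent_hypQF (g : R) : (binQF R 0 g).Equivalent (hypQF R) :=
  ⟨{ toFun := fun z => (z.1 + g * z.2, z.2)
     invFun := fun z => (z.1 - g * z.2, z.2)
     map_add' := fun z w => by ext <;> simp; ring
     map_smul' := fun r z => by ext <;> simp; ring
     left_inv := fun z => by simp
     right_inv := fun z => by simp
     map_app' := fun z => by simp only [binQF_apply, hypQF_apply]; ring }⟩

end BinaryForms

lemma WittEquiv.of_equivalent_prod_hypPow {K : Type*} [CommRing K] {V₁ V₂ : Type*}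
    [AddCommGroup V₁] [Module K V₁] [AddCommGroup V₂] [Module K V₂]
    {Q₁ : QuadraticForm K V₁} {Q₂ : QuadraticForm K V₂} {s : ℕ}
    (h : Q₁.Equivalent (Q₂.prod (hypPow K s))) : WittEquiv Q₁ Q₂ :=
  ⟨0, s, .trans ⟨{ (LinearEquiv.prodUnique : (V₁ × (Fin 0 → K × K)) ≃ₗ[K] V₁) with
    map_app' := fun y => by simp [hypPow, pi_apply] }⟩ h⟩

namespace QuadraticMap

variable {R M : Type*} [CommRing R] [AddCommGroup M] [Module R M]

lemma map_sum_of_polar_eq_zero {N ι : Type*} [AddCommGroup N] [Module R N]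
    (Q : QuadraticMap R M N) (s : Finset ι) (f : ι → M)
    (h : ∀ i ∈ s, ∀ j ∈ s, i ≠ j → polar Q (f i) (f j) = 0) :
    Q (∑ i ∈ s, f i) = ∑ i ∈ s, Q (f i) := by
  classical
  induction s using Finset.induction_on with
  | empty => simp
  | insert a s ha ih =>
    have hpolar : polar Q (f a) (∑ i ∈ s, f i) = 0 := by
      rw [← polarBilin_apply_apply, map_sum]
      exact Finset.sum_eq_zero fun j hj =>
        h a (by simp) j (by simp [hj]) (by rintro rfl; exact ha hj)
    rw [Finset.sum_insert ha, Finset.sum_insert ha, QuadraticMap.map_add (⇑Q), hpolar, add_zero,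
      ih fun i hi j hj => h i (by simp [hi]) j (by simp [hj])]

lemma pi_sum_equivalent_prod {P ι κ : Type*} [AddCommGroup P] [Module R P] [Fintype ι]
    [Fintype κ] (Q : ι ⊕ κ → QuadraticMap R M P) :
    (pi Q).Equivalent ((pi fun i => Q (.inl i)).prod (pi fun k => Q (.inr k))) :=
  ⟨{ LinearEquiv.sumArrowLequivProdArrow ι κ R M with
    map_app' := fun y => by simp [pi_apply, Fintype.sum_sum_type] }⟩

variable {ι : Type*} [Fintype ι]

structure IsSymplecticFamily [DecidableEq ι] (Q : QuadraticForm R M) (u v : ι → M) : Prop where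
  polar_left : ∀ i j, polar Q (u i) (u j) = 0
  polar_right : ∀ i j, polar Q (v i) (v j) = 0
  polar_left_right : ∀ i j, polar Q (u i) (v j) = if i = j then 1 else 0

variable (R) in
noncomputable def pairCombination (u v : ι → M) : (ι → R × R) →ₗ[R] M :=
  ∑ i, (LinearMap.toSpanSingleton R M (u i)).coprod (LinearMap.toSpanSingleton R M (v i)) ∘ₗ
    LinearMap.proj i

lemma pairCombination_apply (u v : ι → M) (w : ι → R × R) :
    pairCombination R u v w = ∑ i, ((w i).1 • u i + (w i).2 • v i) := by
  simp [pairCombination]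

namespace IsSymplecticFamily

variable [DecidableEq ι] {Q : QuadraticForm R M} {u v : ι → M} (h : IsSymplecticFamily Q u v)
include h

lemma comp_pairCombination :
    Q.comp (pairCombination R u v) = pi fun i => binQF R (Q (u i)) (Q (v i)) := by
  ext w
  rw [comp_apply, pairCombination_apply, pi_apply,
    map_sum_of_polar_eq_zero _ _ _ fun i _ j _ hij => ?_]
  · refine Finset.sum_congr rfl fun i _ => ?_
    rw [QuadraticMap.map_add (⇑Q), QuadraticMap.map_smul, QuadraticMap.map_smul,
      polar_smul_left, polar_smul_right, h.polar_left_right, if_pos rfl, binQF_apply]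
    simp only [smul_eq_mul]
    ring
  · simp only [polar_add_left, polar_add_right, polar_smul_left, polar_smul_right,
      h.polar_left, h.polar_right, h.polar_left_right, polar_comm Q (v i) (u j), if_neg hij,
      if_neg (Ne.symm hij)]
    simp

lemma pairCombination_injective : Function.Injective (pairCombination R u v) := by
  rw [← LinearMap.ker_eq_bot, LinearMap.ker_eq_bot']
  intro w hw
  have hfst (j : ι) : polar Q (pairCombination R u v w) (v j) = (w j).1 := by
    simp only [pairCombination_apply, ← polarBilin_apply_apply, map_sum, map_add, map_smul,
      LinearMap.sum_apply, LinearMap.add_apply, LinearMap.smul_apply]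
    simp [polarBilin_apply_apply, h.polar_left_right, h.polar_right]
  have hsnd (j : ι) : polar Q (u j) (pairCombination R u v w) = (w j).2 := by
    simp only [pairCombination_apply, ← polarBilin_apply_apply, map_sum, map_add, map_smul]
    simp [polarBilin_apply_apply, h.polar_left_right, h.polar_left]
  funext j
  ext
  · rw [← hfst, hw]; simp
  · rw [← hsnd, hw]; simp

end IsSymplecticFamily

lemma IsSymplecticFamily.pi_binQF_equivalent {K V : Type*} [Field K] [AddCommGroup V]
    [Module K V] [FiniteDimensional K V] [DecidableEq ι] {Q : QuadraticForm K V} {u v : ι → V}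
    (h : IsSymplecticFamily Q u v) (hdim : Module.finrank K V = 2 * Fintype.card ι) :
    (pi fun i => binQF K (Q (u i)) (Q (v i))).Equivalent Q := by
  have hbij : Function.Bijective (pairCombination K u v) := by
    refine ⟨h.pairCombination_injective, ?_⟩
    rw [← LinearMap.injective_iff_surjective_of_finrank_eq_finrank]
    · exact h.pairCombination_injective
    · rw [Module.finrank_pi_fintype]
      simp [hdim, mul_comm]
  rw [← h.comp_pairCombination]
  exact ⟨(isometryEquivOfCompLinearEquiv Q (LinearEquiv.ofBijective _ hbij)).symm⟩

end QuadraticMap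

namespace AdjoinRoot

variable {F : Type*} [Field F] (p : F[X])

/-- For `s < deg p`, the basis of `F[x]/(p)` dual to `1, x, …, x^{d-1}` under the pairing
`(y, z) ↦ t_p (y z)`. -/
noncomputable def dualPow (s : ℕ) : AdjoinRoot p :=
  ∑ k ∈ Finset.range (p.natDegree - s), p.coeff (s + 1 + k) • root p ^ k

lemma root_pow_succ_mul_dualPow (s : ℕ) :
    root p ^ (s + 1) * dualPow p s = -∑ n ∈ Finset.range (s + 1), p.coeff n • root p ^ n := by
  have h := aeval_eq_sum_range' (p := p) (n := s + 1 + (p.natDegree - s)) (by omega) (root p)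
  rw [aeval_eq, mk_self, Finset.sum_range_add] at h
  rw [eq_neg_iff_add_eq_zero, add_comm, h, dualPow, Finset.mul_sum]
  refine congrArg _ (Finset.sum_congr rfl fun k _ => ?_)
  rw [mul_smul_comm, ← pow_add]

variable {p} {t : AdjoinRoot p →ₗ[F] F}
  (ht : ∀ j < p.natDegree, t (root p ^ j) = if j = p.natDegree - 1 then 1 else 0)
include ht

lemma map_root_pow_mul_dualPow (hp : p.Monic) {r s : ℕ} (hr : r < p.natDegree)
    (hs : s < p.natDegree) : t (root p ^ r * dualPow p s) = if r = s then 1 else 0 := by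
  rcases le_or_gt r s with hrs | hsr
  · have hterm (k : ℕ) (hk : k ∈ Finset.range (p.natDegree - s)) :
        t (root p ^ r * (p.coeff (s + 1 + k) • root p ^ k)) =
          if k = p.natDegree - 1 - r then p.coeff (s + 1 + k) else 0 := by
      rw [Finset.mem_range] at hk
      rw [mul_smul_comm, map_smul, ← pow_add, ht _ (by omega), smul_eq_mul]
      split_ifs <;> first | (exfalso; omega) | simp
    rw [dualPow, Finset.mul_sum, map_sum, Finset.sum_congr rfl hterm, Finset.sum_ite_eq']
    split_ifs with h1 h2 h2 <;> rw [Finset.mem_range] at h1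
    · rw [show s + 1 + (p.natDegree - 1 - r) = p.natDegree by omega, hp.coeff_natDegree]
    all_goals first | rfl | omega
  · -- `x^(s+1) * dualPow p s` is a combination of `x^n`, `n ≤ s`, so `x^r * dualPow p s` is one
    -- of `x^n`, `n < r`, none of which reaches `x^(d-1)`.
    have hzero (n : ℕ) (hn : n ∈ Finset.range (s + 1)) :
        t (root p ^ (r - (s + 1)) * (p.coeff n • root p ^ n)) = 0 := by
      rw [Finset.mem_range] at hn
      rw [mul_smul_comm, map_smul, ← pow_add, ht _ (by omega), if_neg (by omega), smul_zero]
    rw [if_neg hsr.ne', ← Nat.sub_add_cancel hsr, pow_add, mul_assoc, root_pow_succ_mul_dualPow,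
      mul_neg, map_neg, Finset.mul_sum, map_sum, Finset.sum_eq_zero hzero, neg_zero]

lemma map_dualPow_mul_self (hp : p.Monic) {s : ℕ} (hs : s < p.natDegree) :
    t (dualPow p s * dualPow p s) = p.coeff (2 * s + 1) := by
  have hterm (k : ℕ) (hk : k ∈ Finset.range (p.natDegree - s)) :
      t ((p.coeff (s + 1 + k) • root p ^ k) * dualPow p s) =
        if k = s then p.coeff (s + 1 + k) else 0 := by
    rw [Finset.mem_range] at hk
    rw [smul_mul_assoc, map_smul, map_root_pow_mul_dualPow ht hp (by omega) hs, smul_eq_mul]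
    split_ifs <;> simp
  rw [dualPow, Finset.sum_mul, ← dualPow, map_sum, Finset.sum_congr rfl hterm,
    Finset.sum_ite_eq']
  split_ifs with h <;> rw [Finset.mem_range] at h
  · ring_nf
  · exact (coeff_eq_zero_of_natDegree_lt (by omega)).symm

lemma map_mk_of_degree_lt {r : F[X]} (hr : r.degree < p.degree) :
    t (mk p r) = r.coeff (p.natDegree - 1) := by
  rcases eq_or_ne r 0 with rfl | hr0
  · simp
  have hrp := natDegree_lt_natDegree hr0 hr
  have hterm (j : ℕ) (hj : j ∈ Finset.range p.natDegree) :
      t (r.coeff j • root p ^ j) = if j = p.natDegree - 1 then r.coeff j else 0 := by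
    rw [map_smul, ht j (Finset.mem_range.mp hj), smul_eq_mul]
    split_ifs <;> simp
  rw [← aeval_eq, aeval_eq_sum_range' hrp, map_sum, Finset.sum_congr rfl hterm,
    Finset.sum_ite_eq', if_pos (Finset.mem_range.mpr (by omega))]

lemma map_root_pow_eq_coeff_modByMonic (hp : p.Monic) (m : ℕ) :
    t (root p ^ m) = (X ^ m %ₘ p).coeff (p.natDegree - 1) := by
  rw [← map_mk_of_degree_lt ht (degree_modByMonic_lt _ hp), ← modByMonicHom_mk hp,
    mk_leftInverse hp, map_pow (mk p), mk_X]

end AdjoinRoot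

lemma polar_scharlauTransfer_binQF {F L : Type*} [Field F] [CharP F 2] [CommRing L]
    [Algebra F L] (t : L →ₗ[F] F) (a b : L) (z w : L × L) :
    polar (scharlauTransfer (L × L) t (binQF L a b)) z w = t (z.1 * w.2 + w.1 * z.2) := by
  have h2 : (2 : L) = 0 := by rw [← map_ofNat (algebraMap F L), CharTwo.two_eq_zero, map_zero]
  rw [scharlauTransfer, LinearMap.compQuadraticMap_polar, polar_binQF_of_two_eq_zero h2]

section Transfer

variable {F : Type*} [Field F] [CharP F 2] {p : F[X]} {t : AdjoinRoot p →ₗ[F] F}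
  (ht : ∀ j < p.natDegree, t (AdjoinRoot.root p ^ j) = if j = p.natDegree - 1 then 1 else 0)
include ht

open AdjoinRoot in
lemma isSymplecticFamily_scharlauTransfer (hp : p.Monic) (c : AdjoinRoot p) {ι : Type*}
    [DecidableEq ι] (σ : ι → ℕ) (hσ : Function.Injective σ)
    (hσd : ∀ k, σ k < p.natDegree) :
    IsSymplecticFamily (scharlauTransfer _ t (binQF _ 1 c))
      (fun k => (dualPow p (σ k), 0)) (fun k => (0, root p ^ σ k)) where
  polar_left i j := by simp [polar_scharlauTransfer_binQF]
  polar_right i j := by simp [polar_scharlauTransfer_binQF]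
  polar_left_right i j := by
    simp only [polar_scharlauTransfer_binQF, mul_zero, add_zero]
    rw [mul_comm, map_root_pow_mul_dualPow ht hp (hσd j) (hσd i)]
    exact if_congr (hσ.eq_iff.trans eq_comm) rfl rfl

open AdjoinRoot in
theorem pi_binQF_equivalent_scharlauTransfer (hp : p.Monic) (c : AdjoinRoot p) {ι : Type*}
    [Fintype ι] [DecidableEq ι] (σ : ι ≃ Fin p.natDegree) :
    (pi fun k => binQF F (p.coeff (2 * σ k + 1)) (t (c * root p ^ (2 * (σ k : ℕ))))).Equivalent
      (scharlauTransfer _ t (binQF _ 1 c)) := by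
  have := (powerBasis' hp).finite
  have hdim : Module.finrank F (AdjoinRoot p × AdjoinRoot p) = 2 * Fintype.card ι := by
    rw [Module.finrank_prod, (powerBasis' hp).finrank, powerBasis'_dim,
      Fintype.card_congr σ, Fintype.card_fin, two_mul]
  convert (isSymplecticFamily_scharlauTransfer ht hp c (fun k => σ k)
    (Fin.val_injective.comp σ.injective) fun k => (σ k).isLt).pi_binQF_equivalent hdim using 3
    with k
  simp [scharlauTransfer, map_dualPow_mul_self ht hp (σ k).isLt, ← pow_add, two_mul]

end Transfer

theorem transfer_one_ax_pow_even_degree_general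
    (F : Type*) [Field F] [CharP F 2] (p : Polynomial F)
    (hmonic : p.Monic)
    (d e : ℕ) (hd : p.natDegree = d) (hde : d = 2 * e)
    (t : AdjoinRoot p →ₗ[F] F)
    (ht : ∀ j : ℕ, j < d → t (AdjoinRoot.root p ^ j) = if j = d - 1 then 1 else 0)
    (γ : ℤ → F)
    (hγ : ∀ n : ℤ, γ n =
      if n < 0 then 0 else ((X : Polynomial F) ^ (d + n.toNat - 1) %ₘ p).coeff (d - 1))
    (a : F) (i : ℕ) :
    WittEquiv
      (scharlauTransfer _ t
        (binQF (AdjoinRoot p) 1 (algebraMap F (AdjoinRoot p) a * AdjoinRoot.root p ^ i)))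
      (QuadraticMap.pi fun j : Fin e =>
        binQF F (p.coeff (d - (2 * (j : ℕ) + 1))) (a * γ ((i : ℤ) - 2 * (j : ℕ) - 1))) := by
  subst hd
  have hγt (m : ℕ) : γ ((m : ℤ) + 1 - p.natDegree) = t (AdjoinRoot.root p ^ m) := by
    rw [hγ]
    split_ifs with hneg
    · rw [ht m (by omega), if_neg (by omega)]
    · rw [AdjoinRoot.map_root_pow_eq_coeff_modByMonic ht hmonic]
      congr
      omega
  have hta (m : ℕ) : t (algebraMap F _ a * AdjoinRoot.root p ^ i * AdjoinRoot.root p ^ m) =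
      a * t (AdjoinRoot.root p ^ (i + m)) := by
    rw [mul_assoc, ← pow_add, ← Algebra.smul_def, map_smul, smul_eq_mul]
  -- `σ (inl j) = e - 1 - j` and `σ (inr l) = e + l`; the planes indexed by `inr` are hyperbolic
  -- because their first coefficient `p.coeff (2 * (e + l) + 1)` lies above the degree.
  let σ : Fin e ⊕ Fin e ≃ Fin p.natDegree :=
    (Equiv.sumCongr Fin.revPerm (Equiv.refl _)).trans (finSumFinEquiv.trans (finCongr (by omega)))
  refine .of_equivalent_prod_hypPow (s := e) <|
    (pi_binQF_equivalent_scharlauTransfer ht hmonic _ σ).symm.trans <|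
    (pi_sum_equivalent_prod _).trans (.prod (.pi fun j => ?_) (.pi fun l => ?_))
  · have hj : (σ (.inl j) : ℕ) = e - (j + 1) := by simp [σ]
    rw [hj, hta, ← hγt, show 2 * (e - (j + 1)) + 1 = p.natDegree - (2 * j + 1) by omega,
      show ((i + 2 * (e - (j + 1)) : ℕ) : ℤ) + 1 - p.natDegree = i - 2 * j - 1 by omega]
    exact .refl _
  · rw [coeff_eq_zero_of_natDegree_lt (by simp [σ]; omega)]
    exact binQF_zero_equivalent_hypQF _

/-- Lemma 4.2(i), even degree case: for `p` monic irreducible of even degree `d = 2e` over a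
field `F` of characteristic `2`, the Scharlau transfer of `[1, a·x^i]` is Witt equivalent to
`⊥_{j=0}^{e-1} [p_{2j+1}, a·γ_{i-2j-1}]`. -/
theorem transfer_one_ax_pow_even_degree
    (F : Type*) [Field F] [CharP F 2] (p : Polynomial F)
    (hmonic : p.Monic) (hirr : Irreducible p)
    (d e : ℕ) (hd : p.natDegree = d) (hde : d = 2 * e)
    (t : AdjoinRoot p →ₗ[F] F)
    (ht : ∀ j : ℕ, j < d → t (AdjoinRoot.root p ^ j) = if j = d - 1 then 1 else 0)
    (γ : ℤ → F)
    (hγ : ∀ n : ℤ, γ n =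
      if n < 0 then 0 else ((X : Polynomial F) ^ (d + n.toNat - 1) %ₘ p).coeff (d - 1))
    (a : F) (i : ℕ) :
    WittEquiv
      (scharlauTransfer _ t
        (binQF (AdjoinRoot p) 1 (algebraMap F (AdjoinRoot p) a * AdjoinRoot.root p ^ i)))
      (QuadraticMap.pi fun j : Fin e =>
        binQF F (p.coeff (d - (2 * (j : ℕ) + 1))) (a * γ ((i : ℤ) - 2 * (j : ℕ) - 1))) :=
  transfer_one_ax_pow_even_degree_general F p hmonic d e hd hde t ht γ hγ a i
end

section
/- Let F be a field of characteristic 2, let p = x^d + p₁x^{d-1} + … + p_d ∈ F[x] be a monic irreducible polynomial of degree d that is inseparable (i.e., its formal derivative is zero, equivalently p_k = 0 for all odd k), let L = F[x]/(p), and let t_p : L → F be the F-linear map with t_p(x^j) = 0 for 0 ≤ j ≤ d-2 and t_p(x^{d-1}) = 1. Then for every b ∈ F and every integer k ≥ 0, the Scharlau transfer t_p∘[1, bx^k] (a quadratic form of dimension 2d over F) is Witt equivalent to the zero form; that is, there exist natural numbers r, s such that (t_p∘[1, bx^k]) ⊥ H^{⊥r} is isometric to H^{⊥s}. -/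
open QuadraticMap Polynomial

/-! In characteristic 2 the squares of `L = F[x]/(p)` are the elements `h(x²)`. Since
`p(X) = g(X²)`, reducing `h` modulo `g` writes them as combinations of the powers `x^{2i}` with
`2i < deg p`, on which `t_p` vanishes. Hence `t_p(u² + uv + c v²) = t_p(v (u + c v))`, so the
transfer of `[1, c]` is isometric to the transfer `(u, v) ↦ t_p(uv)` of the hyperbolic plane. As `L`
is a field and `t_p ≠ 0`, the pairing `t_p(uv)` is nondegenerate, and a basis of `L` together with
its dual basis splits `L × L` into `d` hyperbolic planes. -/

def LinearEquiv.arrowProdEquivProdArrow (R ι M N : Type*) [Semiring R] [AddCommMonoid M]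
    [AddCommMonoid N] [Module R M] [Module R N] : (ι → M × N) ≃ₗ[R] (ι → M) × (ι → N) :=
  { Equiv.arrowProdEquivProdArrow ι (fun _ => M) (fun _ => N) with
    map_add' := fun _ _ => rfl
    map_smul' := fun _ _ => rfl }

def QuadraticMap.IsometryEquiv.prodUnique {R M₁ M₂ P : Type*} [CommSemiring R]
    [AddCommMonoid M₁] [AddCommMonoid M₂] [AddCommMonoid P] [Module R M₁] [Module R M₂]
    [Module R P] [Unique M₂] (Q₁ : QuadraticMap R M₁ P) (Q₂ : QuadraticMap R M₂ P) :
    (Q₁.prod Q₂).IsometryEquiv Q₁ where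
  toLinearEquiv := LinearEquiv.prodUnique
  map_app' := fun ⟨m, n⟩ => by simp [Subsingleton.elim n 0]

theorem hypPow_apply {K : Type*} [CommRing K] {r : ℕ} (c : Fin r → K × K) :
    hypPow K r c = ∑ i, (c i).1 * (c i).2 := by
  simp [hypPow, hypQF]

theorem LinearMap.BilinForm.Nondegenerate.hypPow_finrank_equivalent {F V : Type*} [Field F]
    [AddCommGroup V] [Module F V] [FiniteDimensional F V] {B : LinearMap.BilinForm F V}
    (hB : B.Nondegenerate) (Q : QuadraticForm F (V × V)) (hQ : ∀ u v, Q (u, v) = B u v) :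
    (hypPow F (Module.finrank F V)).Equivalent Q := by
  set e := Module.finBasis F V
  set f := B.dualBasis hB e
  refine ⟨⟨(LinearEquiv.arrowProdEquivProdArrow F _ F F).trans
    (f.equivFun.symm.prodCongr e.equivFun.symm), fun c => ?_⟩⟩
  simp [hQ, hypPow_apply, LinearEquiv.arrowProdEquivProdArrow, Equiv.arrowProdEquivProdArrow,
    Module.Basis.equivFun_symm_apply, map_sum, LinearMap.sum_apply,
    LinearMap.BilinForm.apply_dualBasis_left, f, mul_comm]

theorem LinearMap.BilinForm.nondegenerate_mul_compr₂_of_ne_zero {F L : Type*} [Field F] [Field L]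
    [Algebra F L] {t : L →ₗ[F] F} (ht : t ≠ 0) :
    LinearMap.BilinForm.Nondegenerate ((LinearMap.mul F L).compr₂ t) := by
  have hrefl : ((LinearMap.mul F L).compr₂ t).IsRefl := fun u v h => by
    simpa [mul_comm] using h
  refine hrefl.nondegenerate_iff_separatingLeft.mpr fun u hu => ?_
  by_contra hu0
  refine ht (LinearMap.ext fun w => ?_)
  simpa [← mul_assoc, mul_inv_cancel₀ hu0] using hu (u⁻¹ * w)

theorem scharlauTransfer_binQF_one_equivalent_hypQF {F L : Type*} [Field F] [CommRing L]
    [Algebra F L] {t : L →ₗ[F] F} (ht : ∀ w, t (w * w) = 0) (c : L) :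
    (scharlauTransfer (L × L) t (binQF L 1 c)).Equivalent
      (scharlauTransfer (L × L) t (hypQF L)) := by
  refine ⟨⟨(LinearEquiv.prodComm F L L).trans
    (LinearEquiv.skewProd (.refl F L) (.refl F L) (LinearMap.mulLeft F c)), fun ⟨u, v⟩ => ?_⟩⟩
  change t (v * (u + c * v)) = t (1 * (u * u) + u * v + c * (v * v))
  rw [one_mul, add_assoc, map_add, ht, zero_add]
  congr 1
  ring

theorem Polynomial.aeval_mul_self_eq_aeval_sq_map_frobenius {F A : Type*} [CommRing F]
    [CharP F 2] [CommRing A] [Algebra F A] (f : F[X]) (x : A) :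
    aeval x f * aeval x f = aeval (x ^ 2) (f.map (frobenius F 2)) := by
  rw [← map_mul, ← _root_.sq, ← map_frobenius_expand, map_expand, expand_aeval]

theorem Polynomial.even_natDegree_of_derivative_eq_zero {F : Type*} [Field F] [CharP F 2]
    {p : F[X]} (hinsep : derivative p = 0) : Even p.natDegree := by
  rw [← expand_contract 2 hinsep two_ne_zero, natDegree_expand]
  exact even_two.mul_left _

theorem AdjoinRoot.apply_mul_self_eq_zero {F : Type*} [Field F] [CharP F 2] {p : F[X]}
    (hmonic : p.Monic) (hinsep : derivative p = 0) (t : AdjoinRoot p →ₗ[F] F)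
    (ht : ∀ j < p.natDegree, Even j → t (root p ^ j) = 0) (w : AdjoinRoot p) :
    t (w * w) = 0 := by
  set g := contract 2 p
  have hg : expand F 2 g = p := expand_contract 2 hinsep two_ne_zero
  have hg_monic : g.Monic := (monic_expand_iff two_pos).mp (hg ▸ hmonic)
  have hg_root : aeval (root p ^ 2) g = 0 := by rw [← expand_aeval, hg, aeval_eq, mk_self]
  obtain ⟨f, rfl⟩ := mk_surjective w
  set r := f.map (frobenius F 2) %ₘ g
  rw [← aeval_eq, aeval_mul_self_eq_aeval_sq_map_frobenius,
    ← aeval_modByMonic_eq_self_of_root hg_root, aeval_eq_sum_range, map_sum]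
  refine Finset.sum_eq_zero fun i _ => ?_
  by_cases hri : r.coeff i = 0
  · rw [hri, zero_smul, map_zero]
  have hr : r ≠ 0 := fun h => hri (by rw [h, coeff_zero])
  have hlt : i < g.natDegree :=
    (le_natDegree_of_ne_zero hri).trans_lt
      (natDegree_lt_natDegree hr (degree_modByMonic_lt _ hg_monic))
  rw [map_smul, ← pow_mul, ht _ (by rw [← hg, natDegree_expand]; omega) (even_two_mul i),
    smul_zero]

/-- For `p` monic irreducible and inseparable (zero formal derivative) over a field `F` of
characteristic `2`, the Scharlau transfer of `[1, b·x^k]` is Witt equivalent to the zero form: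
`(t_p ∘ [1, b·x^k]) ⊥ H^{⊥r}` is isometric to `H^{⊥s}` for some `r, s`. -/
theorem transfer_one_bx_pow_inseparable_isWittTrivial
    (F : Type*) [Field F] [CharP F 2] (p : Polynomial F)
    (hmonic : p.Monic) (hirr : Irreducible p) (hinsep : Polynomial.derivative p = 0)
    (d : ℕ) (hd : p.natDegree = d)
    (t : AdjoinRoot p →ₗ[F] F)
    (ht : ∀ j : ℕ, j < d → t (AdjoinRoot.root p ^ j) = if j = d - 1 then 1 else 0)
    (b : F) (k : ℕ) :
    ∃ r s : ℕ,
      ((scharlauTransfer _ t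
        (binQF (AdjoinRoot p) 1
          (algebraMap F (AdjoinRoot p) b * AdjoinRoot.root p ^ k))).prod
            (hypPow F r)).Equivalent (hypPow F s) := by
  have : Fact (Irreducible p) := ⟨hirr⟩
  have hd_even : Even d := hd ▸ even_natDegree_of_derivative_eq_zero hinsep
  have hd_pos : 0 < d := hd ▸ hirr.natDegree_pos
  have ht_sq : ∀ w, t (w * w) = 0 := AdjoinRoot.apply_mul_self_eq_zero hmonic hinsep t
    fun j hj ⟨n, hn⟩ => by
      obtain ⟨m, hm⟩ := hd_even
      rw [ht j (hd ▸ hj), if_neg (by omega)]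
  have ht_ne : t ≠ 0 := fun h => by simpa [h] using ht (d - 1) (by omega)
  let pb := AdjoinRoot.powerBasis hirr.ne_zero
  have : FiniteDimensional F (AdjoinRoot p) := pb.finite
  have hrank : Module.finrank F (AdjoinRoot p) = d := by
    rw [pb.finrank, AdjoinRoot.powerBasis_dim, hd]
  have hhyp : (hypPow F d).Equivalent (scharlauTransfer _ t (hypQF (AdjoinRoot p))) :=
    hrank ▸ LinearMap.BilinForm.Nondegenerate.hypPow_finrank_equivalent
      (LinearMap.BilinForm.nondegenerate_mul_compr₂_of_ne_zero ht_ne) _ fun _ _ => rfl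
  exact ⟨0, d, .trans ⟨.prodUnique _ _⟩
    ((scharlauTransfer_binQF_one_equivalent_hypQF ht_sq _).trans hhyp.symm)⟩
end

section
/- Let F be a field of characteristic 2 and let p = x^d + p₁x^{d-1} + … + p_d ∈ F[x] be a monic irreducible polynomial of degree d ≥ 1, where p_k denotes the coefficient of x^{d-k} (and p₀ = 1). For each integer n ≥ 0 define γ_n ∈ F as the coefficient of x^{d-1} in the remainder of x^{d+n-1} upon division by p. Then in the field of formal Laurent series F((T)), regarding T as x^{-1}, one has p(T^{-1})^{-1} = T^d · (γ₀ + γ₁T + γ₂T² + …); that is, (Σ_{i=0}^{d} p_i T^{i-d}) · (T^d · Σ_{n≥0} γ_n T^n) = 1. -/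
open Polynomial

/-- The key power series identity. -/
theorem gamma_key
    (F : Type*) [Field F] (p : Polynomial F)
    (hmonic : p.Monic)
    (d : ℕ) (hd : p.natDegree = d) (hd1 : 1 ≤ d)
    (γ : ℕ → F)
    (hγ : ∀ n : ℕ, γ n = ((X : Polynomial F) ^ (d + n - 1) %ₘ p).coeff (d - 1)) :
    (∑ i ∈ Finset.range (d + 1), p.coeff (d - i) • (PowerSeries.X : PowerSeries F) ^ i) *
      PowerSeries.mk γ = 1 := by
  have hdegp : p.degree = (d : WithBot ℕ) := by
    rw [degree_eq_natDegree hmonic.ne_zero, hd]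
  ext n
  rw [Finset.sum_mul]
  simp only [smul_mul_assoc, map_sum, PowerSeries.coeff_smul, PowerSeries.coeff_X_pow_mul',
    PowerSeries.coeff_mk, smul_eq_mul]
  rcases Nat.eq_zero_or_pos n with rfl | hn
  · rw [Finset.sum_eq_single 0]
    · have hγ0 : γ 0 = 1 := by
        rw [hγ 0]
        have h1 : d + 0 - 1 = d - 1 := by omega
        rw [h1, (modByMonic_eq_self_iff hmonic).2, coeff_X_pow, if_pos rfl]
        rw [degree_X_pow, hdegp]
        exact_mod_cast Nat.sub_lt hd1 one_pos
      simp [hγ0, hd ▸ hmonic.coeff_natDegree]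
    · intro i _ hi
      rw [if_neg (by omega), mul_zero]
    · intro h
      exact absurd (Finset.mem_range.2 (by omega)) h
  · -- n ≥ 1 : the sum vanishes
    have hn1 : n ≠ 0 := hn.ne'
    simp only [PowerSeries.coeff_one, if_neg hn1]
    have key : ∀ i ∈ Finset.range (d + 1),
        p.coeff (d - i) * (if i ≤ n then γ (n - i) else 0) =
        ((p.modByMonicHom (p.coeff (d - i) •
          (if i ≤ n then (X : Polynomial F) ^ (d + n - 1 - i) else 0))).coeff (d - 1)) := by
      intro i hi
      by_cases hin : i ≤ n
      · have he : d + (n - i) - 1 = d + n - 1 - i := by omega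
        rw [if_pos hin, if_pos hin, modByMonicHom_apply, smul_modByMonic, coeff_smul,
          smul_eq_mul, hγ (n - i), he]
      · rw [if_neg hin, if_neg hin, mul_zero, smul_zero, modByMonicHom_apply, zero_modByMonic,
          coeff_zero]
    rw [Finset.sum_congr rfl key, ← finset_sum_coeff, ← map_sum]
    -- the sum inside
    set R : Polynomial F := ∑ i ∈ Finset.range (d + 1),
      p.coeff (d - i) • (if i ≤ n then (0 : Polynomial F) else X ^ (d + n - 1 - i)) with hR
    have hsum : (∑ i ∈ Finset.range (d + 1),
        p.coeff (d - i) • (if i ≤ n then (X : Polynomial F) ^ (d + n - 1 - i) else 0)) =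
        X ^ (n - 1) * p - R := by
      rw [eq_sub_iff_add_eq, hR, ← Finset.sum_add_distrib]
      have : ∀ i ∈ Finset.range (d + 1),
          p.coeff (d - i) • (if i ≤ n then (X : Polynomial F) ^ (d + n - 1 - i) else 0) +
          p.coeff (d - i) • (if i ≤ n then (0 : Polynomial F) else X ^ (d + n - 1 - i)) =
          p.coeff (d - i) • (X : Polynomial F) ^ (d + n - 1 - i) := by
        intro i _
        by_cases hin : i ≤ n <;> simp [hin]
      rw [Finset.sum_congr rfl this]
      have hrefl := Finset.sum_range_reflect
        (fun j => p.coeff j • (X : Polynomial F) ^ (n - 1 + j)) (d + 1)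
      have hterm : ∀ i ∈ Finset.range (d + 1),
          p.coeff (d - i) • (X : Polynomial F) ^ (d + n - 1 - i) =
          p.coeff (d + 1 - 1 - i) • (X : Polynomial F) ^ (n - 1 + (d + 1 - 1 - i)) := by
        intro i hi
        have hi' : i ≤ d := by simpa [Nat.lt_succ_iff] using hi
        have h1 : d + 1 - 1 - i = d - i := by omega
        have h2 : d + n - 1 - i = n - 1 + (d - i) := by omega
        rw [h1, h2]
      rw [Finset.sum_congr rfl hterm, hrefl]
      have hp := p.as_sum_range' (d + 1) (by omega)
      calc (∑ j ∈ Finset.range (d + 1), p.coeff j • (X : Polynomial F) ^ (n - 1 + j))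
          = X ^ (n - 1) * ∑ j ∈ Finset.range (d + 1), p.coeff j • (X : Polynomial F) ^ j := by
            rw [Finset.mul_sum]
            refine Finset.sum_congr rfl fun j _ => ?_
            rw [mul_smul_comm, ← pow_add]
        _ = X ^ (n - 1) * p := by
            congr 1
            conv_rhs => rw [hp]
            exact Finset.sum_congr rfl fun j _ => by rw [smul_X_eq_monomial]
    rw [hsum, modByMonicHom_apply, sub_modByMonic,
      (modByMonic_eq_zero_iff_dvd hmonic).2 (dvd_mul_left _ _), zero_sub]
    have hRd : R.degree < p.degree := by
      rw [hdegp, hR]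
      refine lt_of_le_of_lt (degree_sum_le _ _) ?_
      rw [Finset.sup_lt_iff (by exact WithBot.bot_lt_coe d)]
      intro i hi
      have hi' : i ≤ d := by simpa [Nat.lt_succ_iff] using hi
      by_cases hin : i ≤ n
      · simp only [if_pos hin, smul_zero, degree_zero]
        exact WithBot.bot_lt_coe d
      · rw [if_neg hin]
        refine lt_of_le_of_lt (degree_smul_le _ _) ?_
        rw [degree_X_pow]
        exact_mod_cast (by omega : d + n - 1 - i < d)
    rw [(modByMonic_eq_self_iff hmonic).2 hRd, coeff_neg, hR, finset_sum_coeff]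
    rw [Finset.sum_eq_zero, neg_zero]
    intro i hi
    have hi' : i ≤ d := by simpa [Nat.lt_succ_iff] using hi
    by_cases hin : i ≤ n
    · simp [hin]
    · rw [if_neg hin, coeff_smul, coeff_X_pow, if_neg (by omega), smul_zero]

/-- For `p` monic irreducible of degree `d ≥ 1` over a field `F` of characteristic `2`, one
has `p(T⁻¹)⁻¹ = T^d · (γ₀ + γ₁ T + γ₂ T² + …)` in the Laurent series field `F((T))`, i.e.
`(Σ_{i=0}^{d} p_i T^{i-d}) · (T^d · Σ_{n≥0} γ_n T^n) = 1`, where `p_i` is the coefficient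
of `x^{d-i}` in `p` and `γ_n` is the coefficient of `x^{d-1}` in the remainder of
`x^{d+n-1}` upon division by `p`. -/
theorem gamma_laurentSeries_inverse
    (F : Type*) [Field F] [CharP F 2] (p : Polynomial F)
    (hmonic : p.Monic) (hirr : Irreducible p)
    (d : ℕ) (hd : p.natDegree = d) (hd1 : 1 ≤ d)
    (γ : ℕ → F)
    (hγ : ∀ n : ℕ, γ n = ((X : Polynomial F) ^ (d + n - 1) %ₘ p).coeff (d - 1)) :
    (∑ i ∈ Finset.range (d + 1),
        p.coeff (d - i) • ((PowerSeries.X : PowerSeries F) : LaurentSeries F) ^ ((i : ℤ) - d)) *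
      (((PowerSeries.X : PowerSeries F) : LaurentSeries F) ^ (d : ℤ) *
        ((PowerSeries.mk γ : PowerSeries F) : LaurentSeries F)) = 1 := by
  have key := gamma_key F p hmonic d hd hd1 γ hγ
  have hT : ((PowerSeries.X : PowerSeries F) : LaurentSeries F) ≠ 0 := by
    rw [HahnSeries.ofPowerSeries_X]
    exact HahnSeries.single_ne_zero one_ne_zero
  rw [Finset.sum_mul]
  have hterm : ∀ i ∈ Finset.range (d + 1),
      (p.coeff (d - i) • ((PowerSeries.X : PowerSeries F) : LaurentSeries F) ^ ((i : ℤ) - d)) *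
        (((PowerSeries.X : PowerSeries F) : LaurentSeries F) ^ (d : ℤ) *
          ((PowerSeries.mk γ : PowerSeries F) : LaurentSeries F)) =
      (((p.coeff (d - i) • ((PowerSeries.X : PowerSeries F) ^ i * PowerSeries.mk γ)
          : PowerSeries F)) : LaurentSeries F) := by
    intro i _
    rw [← HahnSeries.C_mul_eq_smul, PowerSeries.smul_eq_C_mul, map_mul, map_mul, map_pow,
      HahnSeries.ofPowerSeries_C, mul_assoc, ← mul_assoc
        (((PowerSeries.X : PowerSeries F) : LaurentSeries F) ^ ((i : ℤ) - d)),
      ← zpow_add₀ hT, sub_add_cancel, zpow_natCast]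
  rw [Finset.sum_congr rfl hterm, ← map_sum]
  have : (∑ i ∈ Finset.range (d + 1),
      p.coeff (d - i) • ((PowerSeries.X : PowerSeries F) ^ i * PowerSeries.mk γ)) =
      (1 : PowerSeries F) := by
    rw [← key, Finset.sum_mul]
    exact Finset.sum_congr rfl fun i _ => (Algebra.smul_mul_assoc _ _ _).symm
  rw [this, map_one]
end
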